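/- For every p ∈ [0,1] and every positive integer k, the function γ ↦ Ĩ_p(γ, 1/k) is concave on [0,1]: for all γ₁, γ₃ ∈ [0,1] and all α ∈ [0,1], α·Ĩ_p(γ₁, 1/k) + (1−α)·Ĩ_p(γ₃, 1/k) ≤ Ĩ_p(α·γ₁ + (1−α)·γ₃, 1/k). -/
import Mathlib


/-- Shannon entropy (in bits) of a pmf on `{0,1,…,n}`, with the convention
`0 · log₂ 0 = 0` (automatic since `Real.logb 2 0 = 0`). -/
noncomputable def shannonEntropy (n : ℕ) (q : ℕ → ℝ) : ℝ :=
  -∑ i ∈ Finset.range (n + 1), q i * Real.logb 2 (q i)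

/-- The binomial pmf `Bin(k,p)(i) = C(k,i)·pⁱ·(1−p)^{k−i}`. -/
noncomputable def binPMF (k : ℕ) (p : ℝ) (i : ℕ) : ℝ :=
  (k.choose i : ℝ) * p ^ i * (1 - p) ^ (k - i)

/-- `P` is a probability mass function supported on `{0,1,…,k}`. -/
def IsPMFOn (k : ℕ) (P : ℕ → ℝ) : Prop :=
  (∀ i, 0 ≤ P i) ∧ (∀ i, k < i → P i = 0) ∧ ∑ i ∈ Finset.range (k + 1), P i = 1

/-- The joint pmf of `(X, Y)` where `X ~ P` is supported on `{0,…,k}`, `Z ~ Bin(k,p)`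
is independent of `X`, and `Y = X + Z`. -/
noncomputable def jointPMF (k : ℕ) (p : ℝ) (P : ℕ → ℝ) (x y : ℕ) : ℝ :=
  if x ≤ y then P x * binPMF k p (y - x) else 0

/-- The pmf of `Y = X + Z` (the convolution `P * Bin(k,p)`, supported on `{0,…,2k}`). -/
noncomputable def convBin (k : ℕ) (p : ℝ) (P : ℕ → ℝ) (y : ℕ) : ℝ :=
  ∑ x ∈ Finset.range (k + 1), jointPMF k p P x y

/-- The conditional entropy `H(Y|X) = −Σ_{x,y} P_{XY}(x,y)·log₂(P_{XY}(x,y)/P_X(x))`. -/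
noncomputable def condEntY (k : ℕ) (p : ℝ) (P : ℕ → ℝ) : ℝ :=
  -∑ x ∈ Finset.range (k + 1), ∑ y ∈ Finset.range (2 * k + 1),
    jointPMF k p P x y * Real.logb 2 (jointPMF k p P x y / P x)

/-- The mutual information `I(X;Y) = H(Y) − H(Y|X)` for `Y = X + Z`, `X ~ P` on
`{0,…,k}` independent of `Z ~ Bin(k,p)`. -/
noncomputable def mutualInfoBin (k : ℕ) (p : ℝ) (P : ℕ → ℝ) : ℝ :=
  shannonEntropy (2 * k) (convBin k p P) - condEntY k p P

/-- `Ȟ_p(γ, 1/k)`: the supremum of `H(P * Bin(k,p))` over pmfs `P` on `{0,…,k}`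
with mean `kγ`. -/
noncomputable def Hcheck (k : ℕ) (p γ : ℝ) : ℝ :=
  sSup { h : ℝ | ∃ P : ℕ → ℝ, IsPMFOn k P ∧
    (∑ i ∈ Finset.range (k + 1), (i : ℝ) * P i = (k : ℝ) * γ) ∧
    h = shannonEntropy (2 * k) (convBin k p P) }

/-- `Ĩ_p(γ, 1/k)`: `(1/k)` times the supremum of `I(X; X+Z)` over `X ~ P` supported
on `{0,…,k}` with `E[X] = kγ`, and `Z ~ Bin(k,p)` independent of `X`. -/
noncomputable def Itilde (k : ℕ) (p γ : ℝ) : ℝ :=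
  (1 / (k : ℝ)) * sSup { h : ℝ | ∃ P : ℕ → ℝ, IsPMFOn k P ∧
    (∑ i ∈ Finset.range (k + 1), (i : ℝ) * P i = (k : ℝ) * γ) ∧
    h = mutualInfoBin k p P }

/-! Auxiliary lemmas -/

/-- channel weight -/
noncomputable def chW (k : ℕ) (p : ℝ) (x y : ℕ) : ℝ :=
  if x ≤ y then binPMF k p (y - x) else 0

lemma jointPMF_eq (k : ℕ) (p : ℝ) (P : ℕ → ℝ) (x y : ℕ) :
    jointPMF k p P x y = P x * chW k p x y := by
  unfold jointPMF chW; split <;> simp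

lemma binPMF_nonneg {p : ℝ} (hp0 : 0 ≤ p) (hp1 : p ≤ 1) (k i : ℕ) :
    0 ≤ binPMF k p i := by
  have h1 : (0:ℝ) ≤ 1 - p := by linarith
  unfold binPMF
  positivity

lemma sum_binPMF (k : ℕ) (p : ℝ) :
    ∑ i ∈ Finset.range (k + 1), binPMF k p i = 1 := by
  have h := add_pow p (1 - p) k
  simp only [add_sub_cancel, one_pow] at h
  unfold binPMF
  conv_rhs => rw [h]
  exact Finset.sum_congr rfl fun i _ => by ring

lemma binPMF_le_one {p : ℝ} (hp0 : 0 ≤ p) (hp1 : p ≤ 1) (k i : ℕ) :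
    binPMF k p i ≤ 1 := by
  by_cases hi : i ≤ k
  · calc binPMF k p i ≤ ∑ j ∈ Finset.range (k + 1), binPMF k p j :=
        Finset.single_le_sum (fun j _ => binPMF_nonneg hp0 hp1 k j)
          (Finset.mem_range.2 (Nat.lt_succ_of_le hi))
    _ = 1 := sum_binPMF k p
  · have : k.choose i = 0 := Nat.choose_eq_zero_of_lt (Nat.lt_of_not_le hi)
    simp [binPMF, this]

lemma chW_nonneg {p : ℝ} (hp0 : 0 ≤ p) (hp1 : p ≤ 1) (k x y : ℕ) :
    0 ≤ chW k p x y := by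
  unfold chW; split
  · exact binPMF_nonneg hp0 hp1 _ _
  · exact le_rfl

lemma chW_le_one {p : ℝ} (hp0 : 0 ≤ p) (hp1 : p ≤ 1) (k x y : ℕ) :
    chW k p x y ≤ 1 := by
  unfold chW; split
  · exact binPMF_le_one hp0 hp1 _ _
  · exact zero_le_one

lemma joint_log (k : ℕ) (p : ℝ) (P : ℕ → ℝ) (x y : ℕ) :
    jointPMF k p P x y * Real.logb 2 (jointPMF k p P x y / P x)
      = P x * (chW k p x y * Real.logb 2 (chW k p x y)) := by
  rw [jointPMF_eq]
  by_cases h : P x = 0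
  · simp [h]
  · rw [mul_div_cancel_left₀ _ h]
    ring

lemma condEntY_eq (k : ℕ) (p : ℝ) (P : ℕ → ℝ) :
    condEntY k p P = -∑ x ∈ Finset.range (k + 1),
      P x * ∑ y ∈ Finset.range (2 * k + 1),
        chW k p x y * Real.logb 2 (chW k p x y) := by
  unfold condEntY
  congr 1
  refine Finset.sum_congr rfl fun x _ => ?_
  rw [Finset.mul_sum]
  exact Finset.sum_congr rfl fun y _ => joint_log k p P x y

lemma condEntY_nonneg {p : ℝ} (hp0 : 0 ≤ p) (hp1 : p ≤ 1) (k : ℕ)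
    (P : ℕ → ℝ) (hP : ∀ i, 0 ≤ P i) : 0 ≤ condEntY k p P := by
  rw [condEntY_eq, neg_nonneg]
  refine Finset.sum_nonpos fun x _ => ?_
  refine mul_nonpos_of_nonneg_of_nonpos (hP x) ?_
  refine Finset.sum_nonpos fun y _ => ?_
  refine mul_nonpos_of_nonneg_of_nonpos (chW_nonneg hp0 hp1 k x y) ?_
  exact Real.logb_nonpos one_lt_two (chW_nonneg hp0 hp1 k x y) (chW_le_one hp0 hp1 k x y)

lemma convBin_nonneg {p : ℝ} (hp0 : 0 ≤ p) (hp1 : p ≤ 1) (k : ℕ)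
    (P : ℕ → ℝ) (hP : ∀ i, 0 ≤ P i) (y : ℕ) : 0 ≤ convBin k p P y := by
  refine Finset.sum_nonneg fun x _ => ?_
  rw [jointPMF_eq]
  exact mul_nonneg (hP x) (chW_nonneg hp0 hp1 k x y)

/-- `-q·log₂ q ≤ 2` for `q ≥ 0`. -/
lemma neg_mul_logb_le_two {q : ℝ} (hq : 0 ≤ q) : -(q * Real.logb 2 q) ≤ 2 := by
  rcases eq_or_lt_of_le hq with h | h
  · simp [← h]
  · have hlog : Real.log q⁻¹ ≤ q⁻¹ - 1 := Real.log_le_sub_one_of_pos (by positivity)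
    rw [Real.log_inv] at hlog
    have h2 : (0.6931471803 : ℝ) < Real.log 2 := Real.log_two_gt_d9
    have : -(q * Real.log q) ≤ 1 := by
      have := mul_le_mul_of_nonneg_left hlog hq
      have hq1 : q * q⁻¹ = 1 := mul_inv_cancel₀ (ne_of_gt h)
      nlinarith
    rw [Real.logb, div_eq_mul_inv]
    have hpos : (0:ℝ) < (Real.log 2)⁻¹ := by positivity
    have hle : (Real.log 2)⁻¹ ≤ 2 := by
      rw [inv_le_comm₀ (by linarith) (by norm_num)]
      linarith
    calc -(q * (Real.log q * (Real.log 2)⁻¹)) = -(q * Real.log q) * (Real.log 2)⁻¹ := by ring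
      _ ≤ 1 * (Real.log 2)⁻¹ := by
          exact mul_le_mul_of_nonneg_right this hpos.le
      _ ≤ 2 := by linarith

lemma shannonEntropy_le (n : ℕ) (q : ℕ → ℝ) (hq : ∀ i, 0 ≤ q i) :
    shannonEntropy n q ≤ (n + 1) * 2 := by
  unfold shannonEntropy
  rw [← Finset.sum_neg_distrib]
  calc ∑ i ∈ Finset.range (n + 1), -(q i * Real.logb 2 (q i))
      ≤ ∑ i ∈ Finset.range (n + 1), (2:ℝ) :=
        Finset.sum_le_sum fun i _ => neg_mul_logb_le_two (hq i)
    _ = (n + 1) * 2 := by simp [mul_comm]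

lemma convBin_mix (k : ℕ) (p α : ℝ) (P₁ P₃ : ℕ → ℝ) (y : ℕ) :
    convBin k p (fun i => α * P₁ i + (1 - α) * P₃ i) y
      = α * convBin k p P₁ y + (1 - α) * convBin k p P₃ y := by
  unfold convBin
  simp only [jointPMF_eq]
  rw [Finset.mul_sum, Finset.mul_sum, ← Finset.sum_add_distrib]
  exact Finset.sum_congr rfl fun x _ => by ring

lemma condEntY_mix (k : ℕ) (p α : ℝ) (P₁ P₃ : ℕ → ℝ) :
    condEntY k p (fun i => α * P₁ i + (1 - α) * P₃ i)
      = α * condEntY k p P₁ + (1 - α) * condEntY k p P₃ := by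
  simp only [condEntY_eq]
  rw [mul_neg, mul_neg, Finset.mul_sum, Finset.mul_sum, ← neg_add, ← Finset.sum_add_distrib]
  congr 1
  exact Finset.sum_congr rfl fun x _ => by ring

lemma negmullogb_concave {a b α : ℝ} (ha : 0 ≤ a) (hb : 0 ≤ b)
    (hα0 : 0 ≤ α) (hα1 : α ≤ 1) :
    α * (-(a * Real.logb 2 a)) + (1 - α) * (-(b * Real.logb 2 b))
      ≤ -((α * a + (1 - α) * b) * Real.logb 2 (α * a + (1 - α) * b)) := by
  have key := Real.concaveOn_negMulLog.2 (Set.mem_Ici.2 ha) (Set.mem_Ici.2 hb)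
    hα0 (by linarith : (0:ℝ) ≤ 1 - α) (by ring)
  simp only [smul_eq_mul, Real.negMulLog] at key
  have h2 : (0:ℝ) < Real.log 2 := Real.log_pos one_lt_two
  have heq : ∀ t : ℝ, -(t * Real.logb 2 t) = (-t * Real.log t) * (Real.log 2)⁻¹ := by
    intro t; rw [Real.logb, div_eq_mul_inv]; ring
  rw [heq, heq, heq]
  calc α * (-a * Real.log a * (Real.log 2)⁻¹) + (1 - α) * (-b * Real.log b * (Real.log 2)⁻¹)
      = (α * (-a * Real.log a) + (1 - α) * (-b * Real.log b)) * (Real.log 2)⁻¹ := by ring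
    _ ≤ (-(α * a + (1 - α) * b) * Real.log (α * a + (1 - α) * b)) * (Real.log 2)⁻¹ := by
        exact mul_le_mul_of_nonneg_right key (by positivity)

lemma shannonEntropy_mix (n : ℕ) (α : ℝ) (hα0 : 0 ≤ α) (hα1 : α ≤ 1)
    (q₁ q₃ : ℕ → ℝ) (h₁ : ∀ i, 0 ≤ q₁ i) (h₃ : ∀ i, 0 ≤ q₃ i) :
    α * shannonEntropy n q₁ + (1 - α) * shannonEntropy n q₃
      ≤ shannonEntropy n (fun i => α * q₁ i + (1 - α) * q₃ i) := by
  unfold shannonEntropy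
  rw [← Finset.sum_neg_distrib, ← Finset.sum_neg_distrib, ← Finset.sum_neg_distrib,
    Finset.mul_sum, Finset.mul_sum, ← Finset.sum_add_distrib]
  exact Finset.sum_le_sum fun i _ => negmullogb_concave (h₁ i) (h₃ i) hα0 hα1

lemma mutualInfoBin_mix {p : ℝ} (hp0 : 0 ≤ p) (hp1 : p ≤ 1) (k : ℕ)
    (P₁ P₃ : ℕ → ℝ) (h₁ : ∀ i, 0 ≤ P₁ i) (h₃ : ∀ i, 0 ≤ P₃ i)
    (α : ℝ) (hα0 : 0 ≤ α) (hα1 : α ≤ 1) :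
    α * mutualInfoBin k p P₁ + (1 - α) * mutualInfoBin k p P₃
      ≤ mutualInfoBin k p (fun i => α * P₁ i + (1 - α) * P₃ i) := by
  unfold mutualInfoBin
  rw [condEntY_mix]
  have hconv : convBin k p (fun i => α * P₁ i + (1 - α) * P₃ i)
      = fun y => α * convBin k p P₁ y + (1 - α) * convBin k p P₃ y :=
    funext fun y => convBin_mix k p α P₁ P₃ y
  rw [hconv]
  have := shannonEntropy_mix (2 * k) α hα0 hα1 (convBin k p P₁) (convBin k p P₃)
    (convBin_nonneg hp0 hp1 k P₁ h₁) (convBin_nonneg hp0 hp1 k P₃ h₃)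
  linarith

/-- the feasible set appearing in `Itilde` -/
def Sset (k : ℕ) (p γ : ℝ) : Set ℝ :=
  { h : ℝ | ∃ P : ℕ → ℝ, IsPMFOn k P ∧
    (∑ i ∈ Finset.range (k + 1), (i : ℝ) * P i = (k : ℝ) * γ) ∧
    h = mutualInfoBin k p P }

lemma Sset_nonempty {γ : ℝ} (hγ0 : 0 ≤ γ) (hγ1 : γ ≤ 1) {k : ℕ} (hk : 0 < k) (p : ℝ) :
    (Sset k p γ).Nonempty := by
  set P : ℕ → ℝ := fun i => (if i = 0 then 1 - γ else 0) + (if i = k then γ else 0) with hP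
  refine ⟨mutualInfoBin k p P, P, ⟨?_, ?_, ?_⟩, ?_, rfl⟩
  · intro i
    have h1 : (0:ℝ) ≤ (if i = 0 then 1 - γ else 0) := by split <;> linarith
    have h2 : (0:ℝ) ≤ (if i = k then γ else 0) := by split <;> linarith
    simp only [hP]
    linarith
  · intro i hi
    have h1 : i ≠ 0 := by omega
    have h2 : i ≠ k := by omega
    simp [hP, h1, h2]
  · simp only [hP]
    rw [Finset.sum_add_distrib, Finset.sum_ite_eq' (Finset.range (k+1)) 0,
      Finset.sum_ite_eq' (Finset.range (k+1)) k]
    simp only [Finset.mem_range]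
    rw [if_pos (by omega), if_pos (by omega)]
    ring
  · simp only [hP, mul_add, mul_ite, mul_zero, mul_one]
    rw [Finset.sum_add_distrib]
    have e1 : ∑ i ∈ Finset.range (k+1), (if i = 0 then (i:ℝ) * (1 - γ) else 0) = 0 := by
      rw [Finset.sum_ite_eq' (Finset.range (k+1)) 0 (fun i => (i:ℝ) * (1 - γ))]
      simp
    have e2 : ∑ i ∈ Finset.range (k+1), (if i = k then (i:ℝ) * γ else 0) = (k:ℝ) * γ := by
      rw [Finset.sum_ite_eq' (Finset.range (k+1)) k (fun i => (i:ℝ) * γ)]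
      rw [if_pos (Finset.mem_range.2 (by omega))]
    rw [e1, e2, zero_add]

lemma Sset_bddAbove {p : ℝ} (hp0 : 0 ≤ p) (hp1 : p ≤ 1) (k : ℕ) (γ : ℝ) :
    BddAbove (Sset k p γ) := by
  refine ⟨((2 * k : ℕ) + 1) * 2, fun h hh => ?_⟩
  obtain ⟨P, ⟨hPnn, -, -⟩, -, rfl⟩ := hh
  unfold mutualInfoBin
  have h1 : shannonEntropy (2 * k) (convBin k p P) ≤ ((2 * k : ℕ) + 1) * 2 :=
    shannonEntropy_le (2 * k) (convBin k p P) (convBin_nonneg hp0 hp1 k P hPnn)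
  have h2 : 0 ≤ condEntY k p P := condEntY_nonneg hp0 hp1 k P hPnn
  linarith

lemma mix_le_sSup {S₁ S₃ : Set ℝ} (hne₁ : S₁.Nonempty) (hne₃ : S₃.Nonempty)
    {α c : ℝ} (hα0 : 0 ≤ α) (hα1 : α ≤ 1)
    (key : ∀ x ∈ S₁, ∀ y ∈ S₃, α * x + (1 - α) * y ≤ c) :
    α * sSup S₁ + (1 - α) * sSup S₃ ≤ c := by
  obtain ⟨x₀, hx₀⟩ := hne₁
  obtain ⟨y₀, hy₀⟩ := hne₃
  rcases eq_or_lt_of_le hα0 with h0 | h0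
  · -- α = 0
    subst h0
    have hc : sSup S₃ ≤ c := csSup_le ⟨y₀, hy₀⟩ fun y hy => by
      have := key x₀ hx₀ y hy; linarith
    linarith
  rcases eq_or_lt_of_le hα1 with h1 | h1
  · -- α = 1
    subst h1
    have hc : sSup S₁ ≤ c := csSup_le ⟨x₀, hx₀⟩ fun x hx => by
      have := key x hx y₀ hy₀; linarith
    linarith
  · have hS₁ : sSup S₁ ≤ (c - (1 - α) * sSup S₃) / α := by
      refine csSup_le ⟨x₀, hx₀⟩ fun x hx => ?_
      rw [le_div_iff₀ h0]
      have hS₃ : sSup S₃ ≤ (c - α * x) / (1 - α) := by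
        refine csSup_le ⟨y₀, hy₀⟩ fun y hy => ?_
        rw [le_div_iff₀ (by linarith)]
        have := key x hx y hy; linarith
      have := mul_le_mul_of_nonneg_left hS₃ (by linarith : (0:ℝ) ≤ 1 - α)
      rw [mul_div_cancel₀ _ (by linarith : (1:ℝ) - α ≠ 0)] at this
      linarith
    have := mul_le_mul_of_nonneg_left hS₁ hα0
    rw [mul_div_cancel₀ _ (ne_of_gt h0)] at this
    linarith

/-- For every `p ∈ [0,1]` and positive integer `k`, the function
`γ ↦ Ĩ_p(γ, 1/k)` is concave on `[0,1]`. -/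
theorem Itilde_concave_in_gamma
    (p : ℝ) (hp : p ∈ Set.Icc (0 : ℝ) 1) (k : ℕ) (hk : 0 < k)
    (γ₁ γ₃ : ℝ) (hγ₁ : γ₁ ∈ Set.Icc (0 : ℝ) 1) (hγ₃ : γ₃ ∈ Set.Icc (0 : ℝ) 1)
    (α : ℝ) (hα : α ∈ Set.Icc (0 : ℝ) 1) :
    α * Itilde k p γ₁ + (1 - α) * Itilde k p γ₃ ≤
      Itilde k p (α * γ₁ + (1 - α) * γ₃) := by
  obtain ⟨hp0, hp1⟩ := hp
  obtain ⟨ha0, ha1⟩ := hγ₁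
  obtain ⟨hb0, hb1⟩ := hγ₃
  obtain ⟨hα0, hα1⟩ := hα
  set γ₂ : ℝ := α * γ₁ + (1 - α) * γ₃ with hγ₂def
  have hγ₂0 : 0 ≤ γ₂ := by nlinarith
  have hγ₂1 : γ₂ ≤ 1 := by nlinarith
  have hId : ∀ γ : ℝ, Itilde k p γ = (1 / (k : ℝ)) * sSup (Sset k p γ) := fun γ => rfl
  rw [hId, hId, hId]
  have key : ∀ x ∈ Sset k p γ₁, ∀ y ∈ Sset k p γ₃,
      α * x + (1 - α) * y ≤ sSup (Sset k p γ₂) := by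
    rintro x ⟨P₁, ⟨hP₁n, hP₁s, hP₁1⟩, hm₁, rfl⟩ y ⟨P₃, ⟨hP₃n, hP₃s, hP₃1⟩, hm₃, rfl⟩
    have hmem : mutualInfoBin k p (fun i => α * P₁ i + (1 - α) * P₃ i) ∈ Sset k p γ₂ := by
      refine ⟨fun i => α * P₁ i + (1 - α) * P₃ i, ⟨?_, ?_, ?_⟩, ?_, rfl⟩
      · intro i
        show 0 ≤ α * P₁ i + (1 - α) * P₃ i
        have := hP₁n i; have := hP₃n i
        nlinarith
      · intro i hi
        show α * P₁ i + (1 - α) * P₃ i = 0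
        rw [hP₁s i hi, hP₃s i hi]; ring
      · rw [Finset.sum_add_distrib, ← Finset.mul_sum, ← Finset.mul_sum, hP₁1, hP₃1]; ring
      · have : ∀ i : ℕ, (i:ℝ) * (α * P₁ i + (1 - α) * P₃ i)
            = α * ((i:ℝ) * P₁ i) + (1 - α) * ((i:ℝ) * P₃ i) := fun i => by ring
        simp only [this]
        rw [Finset.sum_add_distrib, ← Finset.mul_sum, ← Finset.mul_sum, hm₁, hm₃]
        ring
    calc α * mutualInfoBin k p P₁ + (1 - α) * mutualInfoBin k p P₃
        ≤ mutualInfoBin k p (fun i => α * P₁ i + (1 - α) * P₃ i) :=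
          mutualInfoBin_mix hp0 hp1 k P₁ P₃ hP₁n hP₃n α hα0 hα1
      _ ≤ sSup (Sset k p γ₂) := le_csSup (Sset_bddAbove hp0 hp1 k γ₂) hmem
  have main := mix_le_sSup (Sset_nonempty ha0 ha1 hk p) (Sset_nonempty hb0 hb1 hk p)
    hα0 hα1 key
  have hkpos : (0:ℝ) ≤ 1 / (k : ℝ) := by positivity
  nlinarith [mul_le_mul_of_nonneg_left main hkpos]
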